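/- arXiv:2108.07691 — 3 statements merged into one kernel-verified Lean document; each statement's English description precedes it below -/
import Mathlib

section
/- Let ε = diag(ε₁, ε₂, ε₃) and μ = diag(μ₁, μ₂, μ₃) be positive diagonal 3×3 matrices and ξ = (ξ₀, ξ') ∈ ℝ × ℝ³. Then det(-ξ₀² I₃ - C(ξ') μ⁻¹ C(ξ') ε⁻¹) = -ξ₀² (ξ₀⁴ - ξ₀² q₀(ξ') + q₁(ξ')), where q₀(ξ') = ξ₁²(1/(ε₂μ₃) + 1/(μ₂ε₃)) + ξ₂²(1/(ε₁μ₃) + 1/(ε₃μ₁)) + ξ₃²(1/(ε₂μ₁) + 1/(ε₁μ₂)) and q₁(ξ') = (ε₁ε₂ε₃μ₁μ₂μ₃)⁻¹ (ε₁ξ₁² + ε₂ξ₂² + ε₃ξ₃²)(μ₁ξ₁² + μ₂ξ₂² + μ₃ξ₃²). -/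
/-!
With `a = μ⁻¹` and `b = ε⁻¹` the claim becomes a polynomial identity in `a`, `b`, `ξ'` and
`s = ξ₀²`. The matrix `C(ξ') diag(a) C(ξ')` is symmetric with explicit quadratic entries, and
expanding `det(-s I - C(ξ') diag(a) C(ξ') diag(b))` gives a cubic `-s (s² - s q₀ + q₁)` in `s`,
with no constant term because `C(ξ')` is singular. In the variables `a`, `b` the coefficient
`q₁` is visibly a product `(Σ b_j b_k ξᵢ²)(Σ a_j a_k ξᵢ²)`, which is the stated one after
clearing the denominators `εᵢ`, `μᵢ`.
-/

/-- The curl matrix `C(ξ')` with `C(ξ') v = ξ' × v`. -/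
def curlMatrix (ξ : Fin 3 → ℝ) : Matrix (Fin 3) (Fin 3) ℝ :=
  !![0, -ξ 2, ξ 1; ξ 2, 0, -ξ 0; -ξ 1, ξ 0, 0]

open Matrix

theorem curlMatrix_mul_diagonal_mul_curlMatrix (ξ a : Fin 3 → ℝ) :
    curlMatrix ξ * diagonal a * curlMatrix ξ =
      !![-(a 1 * ξ 2 ^ 2 + a 2 * ξ 1 ^ 2), a 2 * ξ 0 * ξ 1, a 1 * ξ 0 * ξ 2;
         a 2 * ξ 0 * ξ 1, -(a 0 * ξ 2 ^ 2 + a 2 * ξ 0 ^ 2), a 0 * ξ 1 * ξ 2;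
         a 1 * ξ 0 * ξ 2, a 0 * ξ 1 * ξ 2, -(a 0 * ξ 1 ^ 2 + a 1 * ξ 0 ^ 2)] := by
  rw [curlMatrix, diagonal_fin_three, mul_fin_three, mul_fin_three]
  ext i j
  fin_cases i <;> fin_cases j <;>
    simp only [Fin.zero_eta, Fin.mk_one, Fin.reduceFinMk, of_apply, cons_val] <;> ring

theorem det_neg_smul_one_sub_curlMatrix_mul_diagonal_mul_curlMatrix_mul_diagonal
    (a b ξ : Fin 3 → ℝ) (s : ℝ) :
    (-s • (1 : Matrix (Fin 3) (Fin 3) ℝ)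
        - curlMatrix ξ * diagonal a * curlMatrix ξ * diagonal b).det
      = -s * (s ^ 2
          - s * (ξ 0 ^ 2 * (b 1 * a 2 + a 1 * b 2) + ξ 1 ^ 2 * (b 0 * a 2 + b 2 * a 0)
              + ξ 2 ^ 2 * (b 1 * a 0 + b 0 * a 1))
          + (b 1 * b 2 * ξ 0 ^ 2 + b 0 * b 2 * ξ 1 ^ 2 + b 0 * b 1 * ξ 2 ^ 2)
            * (a 1 * a 2 * ξ 0 ^ 2 + a 0 * a 2 * ξ 1 ^ 2 + a 0 * a 1 * ξ 2 ^ 2)) := by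
  rw [curlMatrix_mul_diagonal_mul_curlMatrix, det_fin_three]
  simp only [Matrix.sub_apply, Matrix.smul_apply, mul_diagonal, one_apply_eq, one_apply_ne, ne_eq,
    Fin.reduceEq, not_false_eq_true, of_apply, cons_val, smul_eq_mul]
  ring

theorem fresnel_polynomial (e m : Fin 3 → ℝ) (he : ∀ i, 0 < e i) (hm : ∀ i, 0 < m i)
    (ξ₀ : ℝ) (ξ' : Fin 3 → ℝ) :
    (-(ξ₀ ^ 2) • (1 : Matrix (Fin 3) (Fin 3) ℝ)
        - curlMatrix ξ' * Matrix.diagonal (fun i => (m i)⁻¹)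
          * curlMatrix ξ' * Matrix.diagonal (fun i => (e i)⁻¹)).det
      = -(ξ₀ ^ 2) * (ξ₀ ^ 4
          - ξ₀ ^ 2 * (ξ' 0 ^ 2 * (1 / (e 1 * m 2) + 1 / (m 1 * e 2))
              + ξ' 1 ^ 2 * (1 / (e 0 * m 2) + 1 / (e 2 * m 0))
              + ξ' 2 ^ 2 * (1 / (e 1 * m 0) + 1 / (e 0 * m 1)))
          + (e 0 * e 1 * e 2 * m 0 * m 1 * m 2)⁻¹
            * (e 0 * ξ' 0 ^ 2 + e 1 * ξ' 1 ^ 2 + e 2 * ξ' 2 ^ 2)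
            * (m 0 * ξ' 0 ^ 2 + m 1 * ξ' 1 ^ 2 + m 2 * ξ' 2 ^ 2)) := by
  rw [det_neg_smul_one_sub_curlMatrix_mul_diagonal_mul_curlMatrix_mul_diagonal]
  field_simp [(he 0).ne', (he 1).ne', (he 2).ne', (hm 0).ne', (hm 1).ne', (hm 2).ne']
end

section
/- Let a, b > 0, ξ' ∈ ℝ³ with ξ' ≠ 0, and set ‖ξ'‖_ε = √(b ξ₁² + a ξ₂² + a ξ₃²). Consider the 6×6 matrix p(ξ)/i = [[ξ₀ I₃, -C(ξ')], [C(ξ') diag(a,b,b), ξ₀ I₃]]. Then the vector v = (0, -ξ₃/(√b‖ξ'‖), ξ₂/(√b‖ξ'‖), -(ξ₂²+ξ₃²)/‖ξ'‖², ξ₁ξ₂/‖ξ'‖², ξ₁ξ₃/‖ξ'‖²) ∈ ℝ⁶ satisfies (p(ξ)/i) v = (ξ₀ - √b ‖ξ'‖) v. -/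
open Matrix

theorem Matrix.fromBlocks_mulVec_sumElim_eq_smul {R ι κ : Type*} [CommRing R] [Fintype ι]
    [Fintype κ] [DecidableEq ι] [DecidableEq κ] {c l : R} {A : Matrix κ ι R} {B : Matrix ι κ R}
    {u : ι → R} {w : κ → R} (hB : B *ᵥ w = l • u) (hA : A *ᵥ u = -l • w) :
    fromBlocks (c • 1) (-B) A (c • 1) *ᵥ Sum.elim u w = (c - l) • Sum.elim u w := by
  rw [fromBlocks_mulVec, Sum.elim_comp_inl, Sum.elim_comp_inr, smul_mulVec, smul_mulVec,
    one_mulVec, one_mulVec, neg_mulVec, hA, hB]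
  ext (i | i) <;>
    simp only [Sum.elim_inl, Sum.elim_inr, Pi.add_apply, Pi.neg_apply, Pi.smul_apply,
      smul_eq_mul] <;>
    ring

theorem Matrix.diagonal_vec3_mulVec_of_apply_zero_eq_zero {R : Type*} [Semiring R] {a b : R}
    {u : Fin 3 → R} (hu : u 0 = 0) :
    diagonal ![a, b, b] *ᵥ u = b • u := by
  ext i
  fin_cases i <;> simp [mulVec_diagonal, hu]

theorem curlMatrix_mulVec (ξ w : Fin 3 → ℝ) : curlMatrix ξ *ᵥ w = ξ ⨯₃ w := by
  ext i
  fin_cases i <;>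
    simp only [curlMatrix, cross_apply, mulVec, vec3_dotProduct, of_apply, Fin.zero_eta,
      Fin.mk_one, Fin.reduceFinMk, cons_val_zero, cons_val_one, cons_val] <;>
    ring

theorem partially_anisotropic_eigenvector_ordinary_general (a b ξ₀ : ℝ)
    (hb : 0 < b) (ξ' : Fin 3 → ℝ) (hξ : ξ' ≠ 0) :
    let n := Real.sqrt (ξ' 0 ^ 2 + ξ' 1 ^ 2 + ξ' 2 ^ 2)
    let p := Matrix.fromBlocks
      (ξ₀ • (1 : Matrix (Fin 3) (Fin 3) ℝ)) (-curlMatrix ξ')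
      (curlMatrix ξ' * Matrix.diagonal ![a, b, b])
      (ξ₀ • (1 : Matrix (Fin 3) (Fin 3) ℝ))
    let v : Fin 3 ⊕ Fin 3 → ℝ := Sum.elim
      ![0, -(ξ' 2) / (Real.sqrt b * n), ξ' 1 / (Real.sqrt b * n)]
      ![-(ξ' 1 ^ 2 + ξ' 2 ^ 2) / n ^ 2, ξ' 0 * ξ' 1 / n ^ 2, ξ' 0 * ξ' 2 / n ^ 2]
    p.mulVec v = (ξ₀ - Real.sqrt b * n) • v := by
  intro n p v
  have hsum : ξ' ⬝ᵥ ξ' = ξ' 0 ^ 2 + ξ' 1 ^ 2 + ξ' 2 ^ 2 := by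
    rw [vec3_dotProduct]; ring
  have hn : 0 < n := Real.sqrt_pos.2 (hsum ▸ dotProduct_self_star_pos_iff.2 hξ)
  have hnorm : ξ' ⬝ᵥ ξ' = n ^ 2 := by
    rw [Real.sq_sqrt (hsum ▸ dotProduct_self_star_nonneg ξ'), hsum]
  have hs : 0 < √b := Real.sqrt_pos.2 hb
  set m : Fin 3 → ℝ := ![0, -ξ' 2, ξ' 1]
  have hm_perp : ξ' ⬝ᵥ m = 0 := by
    simp only [m, vec3_dotProduct, cons_val_zero, cons_val_one, cons_val]; ring
  have hu : ![0, -(ξ' 2) / (√b * n), ξ' 1 / (√b * n)] = (√b * n)⁻¹ • m := by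
    rw [smul_vec3]
    apply vec3_eq <;> simp only [smul_eq_mul] <;> ring
  have hw : ![-(ξ' 1 ^ 2 + ξ' 2 ^ 2) / n ^ 2, ξ' 0 * ξ' 1 / n ^ 2, ξ' 0 * ξ' 2 / n ^ 2]
      = -(n ^ 2)⁻¹ • (ξ' ⨯₃ m) := by
    simp only [m, cross_apply, smul_vec3, cons_val_zero, cons_val_one, cons_val]
    apply vec3_eq <;> simp only [smul_eq_mul] <;> ring
  have hξξm : ξ' ⨯₃ (ξ' ⨯₃ m) = -(n ^ 2) • m := by
    rw [cross_cross_eq_smul_sub_smul', hm_perp, hnorm, zero_smul, zero_sub, neg_smul]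
  simp only [p, v, hu, hw]
  apply fromBlocks_mulVec_sumElim_eq_smul
  · rw [curlMatrix_mulVec, map_smul, hξξm, smul_smul, smul_smul]
    congr 1
    field_simp
  · rw [← mulVec_mulVec, diagonal_vec3_mulVec_of_apply_zero_eq_zero (by simp [m]),
      curlMatrix_mulVec, map_smul, map_smul, smul_smul, smul_smul]
    congr 1
    field_simp
    rw [Real.sq_sqrt hb.le]

theorem partially_anisotropic_eigenvector_ordinary (a b ξ₀ : ℝ) (ha : 0 < a)
    (hb : 0 < b) (ξ' : Fin 3 → ℝ) (hξ : ξ' ≠ 0) :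
    let n := Real.sqrt (ξ' 0 ^ 2 + ξ' 1 ^ 2 + ξ' 2 ^ 2)
    let p := Matrix.fromBlocks
      (ξ₀ • (1 : Matrix (Fin 3) (Fin 3) ℝ)) (-curlMatrix ξ')
      (curlMatrix ξ' * Matrix.diagonal ![a, b, b])
      (ξ₀ • (1 : Matrix (Fin 3) (Fin 3) ℝ))
    let v : Fin 3 ⊕ Fin 3 → ℝ := Sum.elim
      ![0, -(ξ' 2) / (Real.sqrt b * n), ξ' 1 / (Real.sqrt b * n)]
      ![-(ξ' 1 ^ 2 + ξ' 2 ^ 2) / n ^ 2, ξ' 0 * ξ' 1 / n ^ 2, ξ' 0 * ξ' 2 / n ^ 2]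
    p.mulVec v = (ξ₀ - Real.sqrt b * n) • v :=
  partially_anisotropic_eigenvector_ordinary_general a b ξ₀ hb ξ' hξ
end

section
/- Let a, b > 0 and ξ' ∈ ℝ³ with ξ' ≠ 0. Set ‖ξ'‖_ε = √(bξ₁² + aξ₂² + aξ₃²), ξ̃ᵢ = ξᵢ/‖ξ'‖_ε, and p(ξ)/i = [[ξ₀ I₃, -C(ξ')], [C(ξ') diag(a,b,b), ξ₀ I₃]]. Then v = (ξ̃₂² + ξ̃₃², -ξ̃₁ξ̃₂, -ξ̃₁ξ̃₃, 0, -ξ̃₃, ξ̃₂) ∈ ℝ⁶ satisfies (p(ξ)/i) v = (ξ₀ - ‖ξ'‖_ε) v. -/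
open Matrix

theorem fromBlocks_mulVec_sum_elim_eq_sub_smul {R n : Type*} [CommRing R] [Fintype n]
    [DecidableEq n] (ξ₀ μ : R) (M N : Matrix n n R) (E H : n → R)
    (hM : M *ᵥ H = μ • E) (hN : N *ᵥ E = -μ • H) :
    fromBlocks (ξ₀ • 1) (-M) N (ξ₀ • 1) *ᵥ Sum.elim E H = (ξ₀ - μ) • Sum.elim E H := by
  rw [fromBlocks_mulVec, Sum.elim_comp_inl, Sum.elim_comp_inr, neg_mulVec, hM, hN,
    smul_mulVec, smul_mulVec, one_mulVec, one_mulVec]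
  ext (i | i) <;> simp only [Sum.elim_inl, Sum.elim_inr, Pi.add_apply, Pi.neg_apply, Pi.smul_apply,
    smul_eq_mul] <;> ring

theorem diagonal_mulVec_eq_smul_add (a b : ℝ) (w : Fin 3 → ℝ) :
    diagonal ![a, b, b] *ᵥ w = b • w + ((a - b) * w 0) • ![1, 0, 0] := by
  ext i
  fin_cases i <;> simp [mulVec_diagonal]; ring

theorem single_zero_cross (η : Fin 3 → ℝ) : ![1, 0, 0] ⨯₃ η = ![0, -η 2, η 1] := by
  simp [cross_apply]

theorem cross_single_zero_cross (η : Fin 3 → ℝ) :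
    η ⨯₃ (![1, 0, 0] ⨯₃ η) = ![η 1 ^ 2 + η 2 ^ 2, -(η 0 * η 1), -(η 0 * η 2)] := by
  rw [single_zero_cross]
  ext i
  fin_cases i <;> simp [cross_apply]; ring

theorem cross_diagonal_mulVec_cross_single_zero_cross {a b : ℝ} {η : Fin 3 → ℝ}
    (hη : b * η 0 ^ 2 + a * η 1 ^ 2 + a * η 2 ^ 2 = 1) :
    η ⨯₃ (diagonal ![a, b, b] *ᵥ (η ⨯₃ (![1, 0, 0] ⨯₃ η))) = -(![1, 0, 0] ⨯₃ η) := by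
  set H := ![1, 0, 0] ⨯₃ η
  have hE₀ : (η ⨯₃ H) 0 = η 1 ^ 2 + η 2 ^ 2 := by simp [H, cross_single_zero_cross]
  have hηη : η ⬝ᵥ η = η 0 ^ 2 + η 1 ^ 2 + η 2 ^ 2 := by
    simp [dotProduct, Fin.sum_univ_three, sq]
  have hH : η ⨯₃ ![1, 0, 0] = -H := (cross_anticomm _ _).symm
  rw [diagonal_mulVec_eq_smul_add, map_add, map_smul, map_smul, cross_cross_eq_smul_sub_smul',
    dot_cross_self, hH, hE₀, hηη]
  linear_combination (norm := module) -hη • H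

theorem fromBlocks_curlMatrix_mulVec_extraordinary (a b ξ₀ s : ℝ) {η : Fin 3 → ℝ}
    (hη : b * η 0 ^ 2 + a * η 1 ^ 2 + a * η 2 ^ 2 = 1) :
    fromBlocks (ξ₀ • 1) (-curlMatrix (s • η)) (curlMatrix (s • η) * diagonal ![a, b, b])
        (ξ₀ • 1) *ᵥ Sum.elim (η ⨯₃ (![1, 0, 0] ⨯₃ η)) (![1, 0, 0] ⨯₃ η) =
      (ξ₀ - s) • Sum.elim (η ⨯₃ (![1, 0, 0] ⨯₃ η)) (![1, 0, 0] ⨯₃ η) := by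
  apply fromBlocks_mulVec_sum_elim_eq_sub_smul
  · rw [curlMatrix_mulVec, LinearMap.map_smul₂]
  · rw [← mulVec_mulVec, curlMatrix_mulVec, LinearMap.map_smul₂,
      cross_diagonal_mulVec_cross_single_zero_cross hη, smul_neg, neg_smul]

theorem partially_anisotropic_eigenvector_extraordinary_general (a b ξ₀ : ℝ) (ξ' : Fin 3 → ℝ) :
    let nε := Real.sqrt (b * ξ' 0 ^ 2 + a * ξ' 1 ^ 2 + a * ξ' 2 ^ 2)
    let tξ : Fin 3 → ℝ := fun i => ξ' i / nε
    let p := Matrix.fromBlocks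
      (ξ₀ • (1 : Matrix (Fin 3) (Fin 3) ℝ)) (-curlMatrix ξ')
      (curlMatrix ξ' * Matrix.diagonal ![a, b, b])
      (ξ₀ • (1 : Matrix (Fin 3) (Fin 3) ℝ))
    let v : Fin 3 ⊕ Fin 3 → ℝ := Sum.elim
      ![tξ 1 ^ 2 + tξ 2 ^ 2, -(tξ 0 * tξ 1), -(tξ 0 * tξ 2)]
      ![0, -(tξ 2), tξ 1]
    p.mulVec v = (ξ₀ - nε) • v := by
  intro nε tξ p v
  rcases eq_or_ne nε 0 with hn | hn
  -- division by `nε = 0` makes `v = 0`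
  · have hv : v = 0 := by ext (i | i) <;> fin_cases i <;> simp [v, tξ, hn]
    simp [hv]
  have hq : 0 < b * ξ' 0 ^ 2 + a * ξ' 1 ^ 2 + a * ξ' 2 ^ 2 :=
    lt_of_not_ge (Real.sqrt_eq_zero'.not.mp hn)
  have hξ' : ξ' = nε • tξ := by ext i; simp [tξ]; field_simp
  have htξ : b * tξ 0 ^ 2 + a * tξ 1 ^ 2 + a * tξ 2 ^ 2 = 1 := by
    simp only [tξ, div_pow, Real.sq_sqrt hq.le, nε]
    field_simp
  have hv : v = Sum.elim (tξ ⨯₃ (![1, 0, 0] ⨯₃ tξ)) (![1, 0, 0] ⨯₃ tξ) := by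
    rw [cross_single_zero_cross, single_zero_cross]
  simp only [p, hv]
  rw [hξ']
  exact fromBlocks_curlMatrix_mulVec_extraordinary a b ξ₀ nε htξ

theorem partially_anisotropic_eigenvector_extraordinary (a b ξ₀ : ℝ) (ha : 0 < a)
    (hb : 0 < b) (ξ' : Fin 3 → ℝ) (hξ : ξ' ≠ 0) :
    let nε := Real.sqrt (b * ξ' 0 ^ 2 + a * ξ' 1 ^ 2 + a * ξ' 2 ^ 2)
    let tξ : Fin 3 → ℝ := fun i => ξ' i / nε
    let p := Matrix.fromBlocks
      (ξ₀ • (1 : Matrix (Fin 3) (Fin 3) ℝ)) (-curlMatrix ξ')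
      (curlMatrix ξ' * Matrix.diagonal ![a, b, b])
      (ξ₀ • (1 : Matrix (Fin 3) (Fin 3) ℝ))
    let v : Fin 3 ⊕ Fin 3 → ℝ := Sum.elim
      ![tξ 1 ^ 2 + tξ 2 ^ 2, -(tξ 0 * tξ 1), -(tξ 0 * tξ 2)]
      ![0, -(tξ 2), tξ 1]
    p.mulVec v = (ξ₀ - nε) • v :=
  partially_anisotropic_eigenvector_extraordinary_general a b ξ₀ ξ'
end
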